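/- arXiv:1501.06744 — 9 statements merged into one kernel-verified Lean document; each statement's English description precedes it below -/
import Mathlib

section
/- Let V be a finite-dimensional real normed vector space equipped with a symmetric bilinear form B. Let C₁, C₂ ∈ V satisfy B(C₁,C₁) < 0, B(C₂,C₂) < 0 and x := B(C₁,C₂)² / (B(C₁,C₁)·B(C₂,C₂)) < 1. Let A ∈ V satisfy B(A,C₁) = 0, and define a sequence by A₀ = A, A_{2k+1} = A_{2k} + (B(A_{2k},C₂)/(−B(C₂,C₂)))·C₂, and A_{2k+2} = A_{2k+1} + (B(A_{2k+1},C₁)/(−B(C₁,C₁)))·C₁. Set l₁ = B(A,C₂)/(−B(C₂,C₂)). Then for every k ≥ 0 one has A_{2k+1} − A_{2k} = l₁·x^k·C₂ and A_{2k+2} − A_{2k+1} = l₁·x^k·(B(C₁,C₂)/(−B(C₁,C₁)))·C₁; the sequence (A_m) converges to L := A + (l₁/(1−x))·(C₂ − (B(C₁,C₂)/B(C₁,C₁))·C₁); and the limit satisfies B(L, C₁) = B(L, C₂) = 0. -/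
/-!
Inflating along `C₂` and then along `C₁` keeps a class orthogonal to `C₁` and multiplies its
pairing with `C₂` by `x = B(C₁,C₂)² / (B(C₁,C₁) B(C₂,C₂))`. Hence the increments form two
interleaved geometric progressions of ratio `x`, summing to a multiple of the component of `C₂`
orthogonal to `C₁`, and orthogonality of the limit to `C₂` is a direct computation.
-/

open Filter Topology

theorem tendsto_of_hasSum_sub {V : Type*} [AddCommGroup V] [TopologicalSpace V]
    [IsTopologicalAddGroup V] {u : ℕ → V} {s : V} (h : HasSum (fun n ↦ u (n + 1) - u n) s) :
    Tendsto u atTop (𝓝 (u 0 + s)) := by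
  have := h.tendsto_sum_nat.const_add (u 0)
  simpa only [Finset.sum_range_sub, add_sub_cancel] using this

section Inflation

variable {K V : Type*} [Field K] [AddCommGroup V] [Module K V] (B : V →ₗ[K] V →ₗ[K] K)

/-- The maximal formal inflation of `A` along `C`: for `B C C < 0` it adds the largest multiple
`t • C` with `B (A + t • C) C ≥ 0`, so the result is `B`-orthogonal to `C`. -/
def maxInflation (C A : V) : V := A + (B A C / -B C C) • C

theorem maxInflation_sub (C A : V) : maxInflation B C A - A = (B A C / -B C C) • C :=
  add_sub_cancel_left _ _

theorem maxInflation_apply (C A D : V) :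
    B (maxInflation B C A) D = B A D + B A C / -B C C * B C D := by
  simp [maxInflation]

theorem maxInflation_apply_self {C : V} (hC : B C C ≠ 0) (A : V) :
    B (maxInflation B C A) C = 0 := by
  rw [maxInflation_apply]
  field_simp
  ring

variable {B} {C₁ C₂ : V}

theorem maxInflation_apply_of_apply_eq_zero (h21 : B C₂ C₁ = B C₁ C₂) {P : V}
    (hP : B P C₁ = 0) : B (maxInflation B C₂ P) C₁ = B P C₂ / -B C₂ C₂ * B C₁ C₂ := by
  rw [maxInflation_apply, hP, h21, zero_add]

theorem maxInflation_maxInflation_apply (h21 : B C₂ C₁ = B C₁ C₂) (h2 : B C₂ C₂ ≠ 0) {P : V} (hP : B P C₁ = 0) :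
    B (maxInflation B C₁ (maxInflation B C₂ P)) C₂ =
      B C₁ C₂ ^ 2 / (B C₁ C₁ * B C₂ C₂) * B P C₂ := by
  rw [maxInflation_apply, maxInflation_apply_self B h2, maxInflation_apply_of_apply_eq_zero h21 hP]
  field_simp
  ring

/-- The direction `C₂ - (B C₁ C₂ / B C₁ C₁) • C₁` is the component of `C₂` that is
`B`-orthogonal to `C₁`. -/
def inflationLimit (B : V →ₗ[K] V →ₗ[K] K) (C₁ C₂ P : V) : V :=
  P + (B P C₂ / -B C₂ C₂ / (1 - B C₁ C₂ ^ 2 / (B C₁ C₁ * B C₂ C₂))) •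
    (C₂ - (B C₁ C₂ / B C₁ C₁) • C₁)

theorem inflationLimit_apply_left (h21 : B C₂ C₁ = B C₁ C₂) (h1 : B C₁ C₁ ≠ 0) {P : V}
    (hP : B P C₁ = 0) : B (inflationLimit B C₁ C₂ P) C₁ = 0 := by
  simp [inflationLimit, hP, h21, h1]

theorem inflationLimit_apply_right (h2 : B C₂ C₂ ≠ 0)
    (hx : B C₁ C₂ ^ 2 / (B C₁ C₁ * B C₂ C₂) ≠ 1) (P : V) :
    B (inflationLimit B C₁ C₂ P) C₂ = 0 := by
  have hdir : B (C₂ - (B C₁ C₂ / B C₁ C₁) • C₁) C₂ =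
      B C₂ C₂ * (1 - B C₁ C₂ ^ 2 / (B C₁ C₁ * B C₂ C₂)) := by
    simp only [map_sub, map_smul, LinearMap.sub_apply, LinearMap.smul_apply, smul_eq_mul]
    field_simp
  rw [inflationLimit, map_add, LinearMap.add_apply, map_smul, LinearMap.smul_apply, hdir,
    smul_eq_mul, mul_comm (B C₂ C₂), ← mul_assoc, div_mul_cancel₀ _ (sub_ne_zero.2 hx.symm)]
  field_simp
  ring

structure IsAlternatingInflation (B : V →ₗ[K] V →ₗ[K] K) (C₁ C₂ : V) (u : ℕ → V) : Prop where
  odd : ∀ k, u (2 * k + 1) = maxInflation B C₂ (u (2 * k))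
  even : ∀ k, u (2 * k + 2) = maxInflation B C₁ (u (2 * k + 1))

namespace IsAlternatingInflation

variable {u : ℕ → V}

theorem apply_even (hu : IsAlternatingInflation B C₁ C₂ u) (h21 : B C₂ C₁ = B C₁ C₂)
    (h1 : B C₁ C₁ ≠ 0) (h2 : B C₂ C₂ ≠ 0) (hu0 : B (u 0) C₁ = 0) (k : ℕ) :
    B (u (2 * k)) C₁ = 0 ∧
      B (u (2 * k)) C₂ = (B C₁ C₂ ^ 2 / (B C₁ C₁ * B C₂ C₂)) ^ k * B (u 0) C₂ := by
  induction k with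
  | zero => simp [hu0]
  | succ k ih =>
    rw [mul_add_one, hu.even, hu.odd, pow_succ, mul_comm _ (_ / _), mul_assoc, ← ih.2]
    exact ⟨maxInflation_apply_self B h1 _, maxInflation_maxInflation_apply h21 h2 ih.1⟩

theorem sub_odd (hu : IsAlternatingInflation B C₁ C₂ u) (h21 : B C₂ C₁ = B C₁ C₂)
    (h1 : B C₁ C₁ ≠ 0) (h2 : B C₂ C₂ ≠ 0) (hu0 : B (u 0) C₁ = 0) (k : ℕ) :
    u (2 * k + 1) - u (2 * k) =
      (B (u 0) C₂ / -B C₂ C₂ * (B C₁ C₂ ^ 2 / (B C₁ C₁ * B C₂ C₂)) ^ k) • C₂ := by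
  rw [hu.odd, maxInflation_sub, (hu.apply_even h21 h1 h2 hu0 k).2]
  ring_nf

theorem sub_even (hu : IsAlternatingInflation B C₁ C₂ u) (h21 : B C₂ C₁ = B C₁ C₂)
    (h1 : B C₁ C₁ ≠ 0) (h2 : B C₂ C₂ ≠ 0) (hu0 : B (u 0) C₁ = 0) (k : ℕ) :
    u (2 * k + 2) - u (2 * k + 1) =
      (B (u 0) C₂ / -B C₂ C₂ * (B C₁ C₂ ^ 2 / (B C₁ C₁ * B C₂ C₂)) ^ k *
        (B C₁ C₂ / -B C₁ C₁)) • C₁ := by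
  obtain ⟨hC₁, hC₂⟩ := hu.apply_even h21 h1 h2 hu0 k
  rw [hu.even, maxInflation_sub, hu.odd, maxInflation_apply_of_apply_eq_zero h21 hC₁, hC₂]
  ring_nf

end IsAlternatingInflation

end Inflation

section Convergence

variable {V : Type*} [AddCommGroup V] [TopologicalSpace V] [IsTopologicalAddGroup V]
  [Module ℝ V] [ContinuousSMul ℝ V] {B : V →ₗ[ℝ] V →ₗ[ℝ] ℝ} {C₁ C₂ : V} {u : ℕ → V}

theorem IsAlternatingInflation.hasSum_sub (hu : IsAlternatingInflation B C₁ C₂ u)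
    (h21 : B C₂ C₁ = B C₁ C₂) (h1 : B C₁ C₁ ≠ 0) (h2 : B C₂ C₂ ≠ 0)
    (hx : |B C₁ C₂ ^ 2 / (B C₁ C₁ * B C₂ C₂)| < 1) (hu0 : B (u 0) C₁ = 0) :
    HasSum (fun n ↦ u (n + 1) - u n) (inflationLimit B C₁ C₂ (u 0) - u 0) := by
  have hgeom := (hasSum_geometric_of_abs_lt_one hx).mul_left (B (u 0) C₂ / -B C₂ C₂)
  have hsum : HasSum (fun n ↦ u (n + 1) - u n) _ := HasSum.even_add_odd
    (by simpa only [hu.sub_odd h21 h1 h2 hu0] using hgeom.smul_const C₂)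
    (by simpa only [hu.sub_even h21 h1 h2 hu0] using
      (hgeom.mul_right (B C₁ C₂ / -B C₁ C₁)).smul_const C₁)
  rw [inflationLimit, add_sub_cancel_left]
  convert hsum using 1
  module

theorem IsAlternatingInflation.tendsto (hu : IsAlternatingInflation B C₁ C₂ u)
    (h21 : B C₂ C₁ = B C₁ C₂) (h1 : B C₁ C₁ ≠ 0) (h2 : B C₂ C₂ ≠ 0)
    (hx : |B C₁ C₂ ^ 2 / (B C₁ C₁ * B C₂ C₂)| < 1) (hu0 : B (u 0) C₁ = 0) :
    Tendsto u atTop (𝓝 (inflationLimit B C₁ C₂ (u 0))) := by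
  simpa using tendsto_of_hasSum_sub (hu.hasSum_sub h21 h1 h2 hx hu0)

end Convergence

theorem facetoedge_computation_general {V : Type*} [NormedAddCommGroup V]
    [NormedSpace ℝ V]
    (B : V →ₗ[ℝ] V →ₗ[ℝ] ℝ) (hsymm : ∀ x y : V, B x y = B y x)
    (C₁ C₂ : V) (h1 : B C₁ C₁ < 0) (h2 : B C₂ C₂ < 0)
    (hx : (B C₁ C₂) ^ 2 / (B C₁ C₁ * B C₂ C₂) < 1)
    (A : V) (hA : B A C₁ = 0)
    (Aseq : ℕ → V) (h0 : Aseq 0 = A)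
    (hodd : ∀ k : ℕ, Aseq (2 * k + 1) =
      Aseq (2 * k) + (B (Aseq (2 * k)) C₂ / (-(B C₂ C₂))) • C₂)
    (heven : ∀ k : ℕ, Aseq (2 * k + 2) =
      Aseq (2 * k + 1) + (B (Aseq (2 * k + 1)) C₁ / (-(B C₁ C₁))) • C₁) :
    (∀ k : ℕ,
      Aseq (2 * k + 1) - Aseq (2 * k) =
        ((B A C₂ / (-(B C₂ C₂))) * ((B C₁ C₂) ^ 2 / (B C₁ C₁ * B C₂ C₂)) ^ k) • C₂ ∧
      Aseq (2 * k + 2) - Aseq (2 * k + 1) =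
        ((B A C₂ / (-(B C₂ C₂))) * ((B C₁ C₂) ^ 2 / (B C₁ C₁ * B C₂ C₂)) ^ k *
          (B C₁ C₂ / (-(B C₁ C₁)))) • C₁) ∧
    Tendsto Aseq atTop
      (nhds (A + ((B A C₂ / (-(B C₂ C₂))) /
          (1 - (B C₁ C₂) ^ 2 / (B C₁ C₁ * B C₂ C₂))) •
        (C₂ - (B C₁ C₂ / B C₁ C₁) • C₁))) ∧
    B (A + ((B A C₂ / (-(B C₂ C₂))) /
          (1 - (B C₁ C₂) ^ 2 / (B C₁ C₁ * B C₂ C₂))) •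
        (C₂ - (B C₁ C₂ / B C₁ C₁) • C₁)) C₁ = 0 ∧
    B (A + ((B A C₂ / (-(B C₂ C₂))) /
          (1 - (B C₁ C₂) ^ 2 / (B C₁ C₁ * B C₂ C₂))) •
        (C₂ - (B C₁ C₂ / B C₁ C₁) • C₁)) C₂ = 0 := by
  subst h0
  have hu : IsAlternatingInflation B C₁ C₂ Aseq := ⟨hodd, heven⟩
  have h21 := hsymm C₂ C₁
  have hx0 : 0 ≤ B C₁ C₂ ^ 2 / (B C₁ C₁ * B C₂ C₂) :=
    div_nonneg (sq_nonneg _) (mul_pos_of_neg_of_neg h1 h2).le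
  exact ⟨fun k ↦ ⟨hu.sub_odd h21 h1.ne h2.ne hA k, hu.sub_even h21 h1.ne h2.ne hA k⟩,
    hu.tendsto h21 h1.ne h2.ne (by rwa [abs_of_nonneg hx0]) hA,
    inflationLimit_apply_left h21 h1.ne hA, inflationLimit_apply_right h2.ne hx.ne _⟩

/-- Computational core of Lemma `facetoedge`: alternating maximal formal
J-inflations along two negative classes `C₁, C₂` form a geometric series whose
limit `L = A + (l₁/(1−x))·(C₂ − (B(C₁,C₂)/B(C₁,C₁))·C₁)` is orthogonal to both
`C₁` and `C₂`. -/
theorem facetoedge_computation {V : Type*} [NormedAddCommGroup V]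
    [NormedSpace ℝ V] [FiniteDimensional ℝ V]
    (B : V →ₗ[ℝ] V →ₗ[ℝ] ℝ) (hsymm : ∀ x y : V, B x y = B y x)
    (C₁ C₂ : V) (h1 : B C₁ C₁ < 0) (h2 : B C₂ C₂ < 0)
    (hx : (B C₁ C₂) ^ 2 / (B C₁ C₁ * B C₂ C₂) < 1)
    (A : V) (hA : B A C₁ = 0)
    (Aseq : ℕ → V) (h0 : Aseq 0 = A)
    (hodd : ∀ k : ℕ, Aseq (2 * k + 1) =
      Aseq (2 * k) + (B (Aseq (2 * k)) C₂ / (-(B C₂ C₂))) • C₂)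
    (heven : ∀ k : ℕ, Aseq (2 * k + 2) =
      Aseq (2 * k + 1) + (B (Aseq (2 * k + 1)) C₁ / (-(B C₁ C₁))) • C₁) :
    (∀ k : ℕ,
      Aseq (2 * k + 1) - Aseq (2 * k) =
        ((B A C₂ / (-(B C₂ C₂))) * ((B C₁ C₂) ^ 2 / (B C₁ C₁ * B C₂ C₂)) ^ k) • C₂ ∧
      Aseq (2 * k + 2) - Aseq (2 * k + 1) =
        ((B A C₂ / (-(B C₂ C₂))) * ((B C₁ C₂) ^ 2 / (B C₁ C₁ * B C₂ C₂)) ^ k *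
          (B C₁ C₂ / (-(B C₁ C₁)))) • C₁) ∧
    Tendsto Aseq atTop
      (nhds (A + ((B A C₂ / (-(B C₂ C₂))) /
          (1 - (B C₁ C₂) ^ 2 / (B C₁ C₁ * B C₂ C₂))) •
        (C₂ - (B C₁ C₂ / B C₁ C₁) • C₁))) ∧
    B (A + ((B A C₂ / (-(B C₂ C₂))) /
          (1 - (B C₁ C₂) ^ 2 / (B C₁ C₁ * B C₂ C₂))) •
        (C₂ - (B C₁ C₂ / B C₁ C₁) • C₁)) C₁ = 0 ∧
    B (A + ((B A C₂ / (-(B C₂ C₂))) /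
          (1 - (B C₁ C₂) ^ 2 / (B C₁ C₁ * B C₂ C₂))) •
        (C₂ - (B C₁ C₂ / B C₁ C₁) • C₁)) C₂ = 0 :=
  facetoedge_computation_general B hsymm C₁ C₂ h1 h2 hx A hA Aseq h0 hodd heven
end

section
/- There do not exist integers k, a, m, b₁, …, b_k with 1 ≤ k ≤ 9, a ≥ 1 and m ≥ 1 such that m + a² = b₁² + ⋯ + b_k² and m + 3a ≤ b₁ + ⋯ + b_k. -/
/-!
Since `b ≤ b²` for integers, `m + 3a ≤ Σ bᵢ ≤ Σ bᵢ² = m + a²`, so `a ≥ 3`. Cauchy–Schwarz with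
`k ≤ 9` gives `(m + 3a)² ≤ (Σ bᵢ)² ≤ 9 (m + a²)`, i.e. `m + 6a ≤ 9`, which contradicts `a ≥ 3`.
-/

open Finset

theorem Int.sum_le_sum_sq {ι : Type*} (s : Finset ι) (f : ι → ℤ) :
    ∑ i ∈ s, f i ≤ ∑ i ∈ s, f i ^ 2 :=
  sum_le_sum fun i _ => Int.le_self_sq (f i)

theorem sq_sum_le_mul_sum_sq_of_card_le {ι : Type*} [Fintype ι] {n : ℕ}
    (hn : Fintype.card ι ≤ n) (f : ι → ℤ) : (∑ i, f i) ^ 2 ≤ n * ∑ i, f i ^ 2 :=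
  calc (∑ i, f i) ^ 2 ≤ Fintype.card ι * ∑ i, f i ^ 2 := by
        simpa using sq_sum_le_card_mul_sum_sq (s := univ) (f := f)
    _ ≤ n * ∑ i, f i ^ 2 := by gcongr

/-- Numerical content of Proposition `extreme` (1): there are no integers
`k, a, m, b₁, …, b_k` with `1 ≤ k ≤ 9`, `a ≥ 1`, `m ≥ 1` such that
`m + a² = Σ bᵢ²` and `m + 3a ≤ Σ bᵢ`. -/
theorem no_higher_genus_negative_curve :
    ¬ ∃ (k : ℕ) (a m : ℤ) (b : Fin k → ℤ),
      1 ≤ k ∧ k ≤ 9 ∧ 1 ≤ a ∧ 1 ≤ m ∧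
      m + a ^ 2 = ∑ i, (b i) ^ 2 ∧ m + 3 * a ≤ ∑ i, b i := by
  rintro ⟨k, a, m, b, -, hk9, ha, hm, hQ, hS⟩
  have hSQ := Int.sum_le_sum_sq univ b
  have hCS := sq_sum_le_mul_sum_sq_of_card_le ((Fintype.card_fin k).trans_le hk9) b
  rw [← hQ] at hSQ hCS
  have ha3 : 3 ≤ a :=
    le_of_mul_le_mul_right (by rw [← sq]; linarith : 3 * a ≤ a * a) (by omega : 0 < a)
  have hsq : (m + 3 * a) ^ 2 ≤ 9 * (m + a ^ 2) :=
    (pow_le_pow_left₀ (by omega) hS 2).trans (by exact_mod_cast hCS)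
  nlinarith [mul_le_mul_of_nonneg_left ha3 (by omega : 0 ≤ m)]
end

section
/- Let k, a be integers with 1 ≤ k ≤ 9 and a ≥ 1, and let b₁, …, b_k be integers such that a² ≥ b₁² + ⋯ + b_k² and b₁ + ⋯ + b_k ≥ 3a. Then k = 9 and there exists an integer m ≥ 1 with a = 3m and bᵢ = m for every i. -/
/-!
Expand `∑ᵢ (3bᵢ - a)² = 9 ∑ bᵢ² - 6a ∑ bᵢ + k a²`. The two hypotheses bound this by
`9a² - 18a² + k a² = (k - 9) a²`, and a sum of squares is nonnegative, so `k ≥ 9`; for `k = 9`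
the sum vanishes, forcing `3bᵢ = a` for every `i`.
-/

open Finset

theorem sum_sq_three_mul_sub_le {ι R : Type*} [Fintype ι] [CommRing R] [LinearOrder R]
    [IsStrictOrderedRing R] {a : R} (ha : 0 ≤ a) {b : ι → R}
    (hsq : ∑ i, b i ^ 2 ≤ a ^ 2) (hsum : 3 * a ≤ ∑ i, b i) :
    ∑ i, (3 * b i - a) ^ 2 ≤ (Fintype.card ι - 9) * a ^ 2 := by
  have hexpand : ∑ i, (3 * b i - a) ^ 2
      = 9 * ∑ i, b i ^ 2 - 6 * a * ∑ i, b i + Fintype.card ι * a ^ 2 := by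
    simp only [sub_sq, sum_add_distrib, sum_sub_distrib, sum_const, card_univ, nsmul_eq_mul,
      mul_pow, ← sum_mul, ← mul_sum]
    ring
  rw [hexpand]
  nlinarith

theorem eq_of_sum_sq_sub_nonpos {ι R : Type*} [Fintype ι] [Ring R] [LinearOrder R]
    [IsStrictOrderedRing R] {f : ι → R} {c : R} (h : ∑ i, (f i - c) ^ 2 ≤ 0) (i : ι) :
    f i = c := by
  have hzero : ∑ i, (f i - c) ^ 2 = 0 := le_antisymm h (sum_nonneg fun _ _ ↦ sq_nonneg _)
  have hi := (sum_eq_zero_iff_of_nonneg fun _ _ ↦ sq_nonneg _).mp hzero i (mem_univ i)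
  exact sub_eq_zero.mp (pow_eq_zero_iff two_ne_zero |>.mp hi)

theorem dim0good_general (k : ℕ) (hk9 : k ≤ 9) (a : ℤ) (ha : 1 ≤ a)
    (b : Fin k → ℤ)
    (hsq : ∑ i, (b i) ^ 2 ≤ a ^ 2)
    (hsum : 3 * a ≤ ∑ i, b i) :
    k = 9 ∧ ∃ m : ℤ, 1 ≤ m ∧ a = 3 * m ∧ ∀ i, b i = m := by
  have hdev := sum_sq_three_mul_sub_le (by omega) hsq hsum
  rw [Fintype.card_fin] at hdev
  have hk : k = 9 := by
    have hnonneg : 0 ≤ ∑ i, (3 * b i - a) ^ 2 := sum_nonneg fun _ _ ↦ sq_nonneg _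
    have : (9 : ℤ) ≤ k := by nlinarith
    omega
  subst hk
  have h3 : ∀ i, 3 * b i = a := eq_of_sum_sq_sub_nonpos (by simpa using hdev)
  refine ⟨rfl, b 0, by linarith [h3 0], (h3 0).symm, fun i ↦ ?_⟩
  linarith [h3 i, h3 0]

/-- Numerical content of Lemma `dim0good`: if `1 ≤ k ≤ 9`, `a ≥ 1`,
`a² ≥ Σ bᵢ²` and `Σ bᵢ ≥ 3a`, then `k = 9` and `(a; b₁, …, b₉) = (3m; m, …, m)`
for some integer `m ≥ 1`. -/
theorem dim0good (k : ℕ) (hk1 : 1 ≤ k) (hk9 : k ≤ 9) (a : ℤ) (ha : 1 ≤ a)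
    (b : Fin k → ℤ)
    (hsq : ∑ i, (b i) ^ 2 ≤ a ^ 2)
    (hsum : 3 * a ≤ ∑ i, b i) :
    k = 9 ∧ ∃ m : ℤ, 1 ≤ m ∧ a = 3 * m ∧ ∀ i, b i = m :=
  dim0good_general k hk9 a ha b hsq hsum
end

section
/- Let k ≤ 8 and let a ≥ 1 and b₁, …, b_k ≥ 0 be integers satisfying a² < b₁² + ⋯ + b_k² and (a−1)(a−2) = Σᵢ bᵢ(bᵢ−1). Then, up to a permutation of (b₁, …, b_k), one of the following holds: (1) a = 1 and every bᵢ ∈ {0,1}; (2) a = 2 and every bᵢ ∈ {0,1}; (3) a = 3, exactly one bᵢ equals 2 and all other bᵢ lie in {0,1}; (4) a = 4, exactly three bᵢ equal 2 and all other bᵢ lie in {0,1}; (5) a = 5, exactly two bᵢ equal 1 and every other nonzero bᵢ equals 2; (6) a = 6, exactly one bᵢ equals 3 and every other nonzero bᵢ equals 2. -/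
open Finset

/-!
Write `S₁ = ∑ bᵢ` and `S₂ = ∑ bᵢ²`. The adjunction equality says `S₂ - S₁ = (a-1)(a-2)`, so
negativity `a² < S₂` becomes `S₁ ≥ 3a - 1`. Cauchy–Schwarz with `k ≤ 8` gives
`S₁² ≤ 8 S₂ = 8 (S₁ + (a-1)(a-2))`, which together with `S₁ ≥ 3a - 1` forces
`(a-7)(a+1) ≤ 0`, i.e. `a ≤ 7`. Then every `bᵢ(bᵢ-1) ≤ 30`, so `0 ≤ bᵢ ≤ 6`, and counting how
many `bᵢ` take each value `0, …, 6` turns the problem into linear integer arithmetic for each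
of the seven values of `a`.
-/

namespace Finset

variable {ι κ R : Type*} [DecidableEq κ] {s : Finset ι} {t : Finset κ} {g : ι → κ}

theorem sum_comp_eq_sum_card_filter_mul [NonAssocSemiring R] (hg : ∀ i ∈ s, g i ∈ t)
    (f : κ → R) : ∑ i ∈ s, f (g i) = ∑ j ∈ t, #{i ∈ s | g i = j} * f j := by
  simp_rw [← nsmul_eq_mul, ← sum_const, sum_fiberwise_of_maps_to' hg]

theorem forall_iff_card_filter_eq_zero [Fintype ι] (hg : ∀ i, g i ∈ t) (P : κ → Prop) :
    (∀ i, P (g i)) ↔ ∀ j ∈ t, ¬P j → #{i | g i = j} = 0 := by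
  simp only [card_eq_zero, filter_eq_empty_iff, mem_univ, true_imp_iff]
  refine ⟨fun h j _ hj i hij => hj (hij ▸ h i), fun h i => ?_⟩
  by_contra hP
  exact h (g i) (hg i) hP rfl

end Finset

namespace NegativeCurve

variable {ι : Type*} [Fintype ι] {a : ℤ} {b : ι → ℤ}

theorem sum_sq_eq_sum_add (hadj : (a - 1) * (a - 2) = ∑ i, b i * (b i - 1)) :
    ∑ i, b i ^ 2 = ∑ i, b i + (a - 1) * (a - 2) := by
  rw [hadj, ← sum_add_distrib]
  exact sum_congr rfl fun i _ => by ring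

theorem three_mul_sub_two_lt_sum (hneg : a ^ 2 < ∑ i, b i ^ 2)
    (hadj : (a - 1) * (a - 2) = ∑ i, b i * (b i - 1)) : 3 * a - 2 < ∑ i, b i := by
  nlinarith [sum_sq_eq_sum_add hadj]

theorem le_seven (hk : Fintype.card ι ≤ 8) (hneg : a ^ 2 < ∑ i, b i ^ 2)
    (hadj : (a - 1) * (a - 2) = ∑ i, b i * (b i - 1)) : a ≤ 7 := by
  have hS₁ := three_mul_sub_two_lt_sum hneg hadj
  have hCS : (∑ i, b i) ^ 2 ≤ 8 * ∑ i, b i ^ 2 :=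
    sq_sum_le_card_mul_sum_sq.trans <|
      mul_le_mul_of_nonneg_right (by exact_mod_cast hk) (sum_nonneg fun i _ => sq_nonneg _)
  rw [sum_sq_eq_sum_add hadj] at hCS
  by_contra! h
  -- `x ↦ x² - 8x` is increasing past `x = 4`, so `S₁ ≥ 3a - 1` bounds `S₁² - 8 S₁` from below
  nlinarith [mul_nonneg (by omega : 0 ≤ ∑ i, b i - (3 * a - 1))
    (by omega : 0 ≤ ∑ i, b i + (3 * a - 1) - 8)]

theorem le_six (ha : 1 ≤ a) (ha7 : a ≤ 7) (hadj : (a - 1) * (a - 2) = ∑ i, b i * (b i - 1))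
    (i : ι) : b i ≤ 6 := by
  have hi : b i * (b i - 1) ≤ (a - 1) * (a - 2) :=
    hadj ▸ single_le_sum (f := fun j => b j * (b j - 1))
      (fun j _ => by nlinarith [sq_nonneg (2 * b j - 1)]) (mem_univ i)
  nlinarith

end NegativeCurve

open NegativeCurve in
/-- Proposition `a>0` in arithmetic form: classification of the solutions of
`a² < Σ bᵢ²`, `(a−1)(a−2) = Σ bᵢ(bᵢ−1)` with `k ≤ 8`, `a ≥ 1`, `bᵢ ≥ 0`. -/
theorem negative_curve_classification (k : ℕ) (hk : k ≤ 8) (a : ℤ) (ha : 1 ≤ a)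
    (b : Fin k → ℤ) (hb : ∀ i, 0 ≤ b i)
    (hneg : a ^ 2 < ∑ i, (b i) ^ 2)
    (hadj : (a - 1) * (a - 2) = ∑ i, b i * (b i - 1)) :
    (a = 1 ∧ ∀ i, b i = 0 ∨ b i = 1) ∨
    (a = 2 ∧ ∀ i, b i = 0 ∨ b i = 1) ∨
    (a = 3 ∧ (Finset.univ.filter (fun i => b i = 2)).card = 1 ∧
      ∀ i, b i = 0 ∨ b i = 1 ∨ b i = 2) ∨
    (a = 4 ∧ (Finset.univ.filter (fun i => b i = 2)).card = 3 ∧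
      ∀ i, b i = 0 ∨ b i = 1 ∨ b i = 2) ∨
    (a = 5 ∧ (Finset.univ.filter (fun i => b i = 1)).card = 2 ∧
      ∀ i, b i = 0 ∨ b i = 1 ∨ b i = 2) ∨
    (a = 6 ∧ (Finset.univ.filter (fun i => b i = 3)).card = 1 ∧
      ∀ i, b i = 0 ∨ b i = 2 ∨ b i = 3) := by
  have ha7 := le_seven (by simpa using hk) hneg hadj
  have hvalues : ∀ i, b i ∈ Icc 0 6 := fun i => mem_Icc.2 ⟨hb i, le_six ha ha7 hadj i⟩
  have hcount : ∑ j ∈ Icc 0 6, #{i | b i = j} = k := by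
    rw [← card_eq_sum_card_fiberwise fun i _ => hvalues i, card_univ, Fintype.card_fin]
  rw [sum_comp_eq_sum_card_filter_mul (fun i _ => hvalues i) (· ^ 2)] at hneg
  rw [sum_comp_eq_sum_card_filter_mul (fun i _ => hvalues i) fun x => x * (x - 1)] at hadj
  simp only [forall_iff_card_filter_eq_zero hvalues fun x => x = 0 ∨ x = 1,
    forall_iff_card_filter_eq_zero hvalues fun x => x = 0 ∨ x = 1 ∨ x = 2,
    forall_iff_card_filter_eq_zero hvalues fun x => x = 0 ∨ x = 2 ∨ x = 3]
  rw [show Icc (0 : ℤ) 6 = {0, 1, 2, 3, 4, 5, 6} by decide] at *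
  simp [sum_insert, -card_eq_zero] at hcount hneg hadj
  interval_cases a <;> norm_num [-card_eq_zero] <;> omega
end

section
/- Let a, b₁, …, b₉ be integers with b₁ + ⋯ + b₉ = 3a and b₁² + ⋯ + b₉² = a² + 2. Then, up to a permutation of (b₁, …, b₉), there is an integer t such that (a; b₁, …, b₉) equals one of: (3t; t+1, t−1, t, t, t, t, t, t, t); (3t+2; t, t, t, t+1, t+1, t+1, t+1, t+1, t+1); or (3t−2; t, t, t, t−1, t−1, t−1, t−1, t−1, t−1). -/
open Finset

/-!
Centre the entries at an integer `c` with `|a - 3c| ≤ 1`: the deviations `bᵢ - c` have sum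
`3(a - 3c)` and sum of squares `(a - 3c)² + 2 ≤ 3`, so they lie in `{-1, 0, 1}`. A `{-1, 0, 1}`-valued
tuple is determined up to permutation by its sum and sum of squares, which leaves one pattern for
each residue of `a` mod `3`.
-/

theorem Equiv.Perm.exists_comp_eq_of_card_fiber_eq {ι α : Type*} [Fintype ι] [DecidableEq α]
    {v w : ι → α} (h : ∀ z, #{i | v i = z} = #{i | w i = z}) :
    ∃ σ : Equiv.Perm ι, v ∘ σ = w :=
  ⟨Equiv.ofFiberEquiv fun z => Fintype.equivOfCardEq <| by
      simp only [Fintype.card_subtype, h],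
    funext <| Equiv.ofFiberEquiv_map _⟩

lemma Int.abs_le_one_of_sq_le_three {x : ℤ} (h : x ^ 2 ≤ 3) : |x| ≤ 1 := by
  rw [abs_le]; constructor <;> nlinarith

-- On `{-1, 0, 1}` the indicator of a point is a quadratic polynomial (Lagrange interpolation).
lemma Int.two_mul_card_fiber_eq {ι : Type*} [Fintype ι] {v : ι → ℤ} (hv : ∀ i, |v i| ≤ 1)
    {z : ℤ} (hz : |z| ≤ 1) :
    2 * (#{i | v i = z} : ℤ) =
      (3 * z ^ 2 - 2) * ∑ i, v i ^ 2 + z * ∑ i, v i + (2 - 2 * z ^ 2) * Fintype.card ι := by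
  have hpt : ∀ i, 2 * (if v i = z then 1 else 0 : ℤ) =
      (3 * z ^ 2 - 2) * v i ^ 2 + z * v i + (2 - 2 * z ^ 2) := by
    intro i
    have hvi := hv i
    rw [abs_le] at hvi hz
    obtain rfl | rfl | rfl : z = -1 ∨ z = 0 ∨ z = 1 := by omega
    all_goals obtain h | h | h : v i = -1 ∨ v i = 0 ∨ v i = 1 := by omega
    all_goals simp [h]
  simp only [natCast_card_filter, mul_sum, hpt, sum_add_distrib, sum_const, card_univ,
    nsmul_eq_mul]
  ring

theorem Int.exists_perm_comp_eq_of_sum_eq_of_sum_sq_eq {ι : Type*} [Fintype ι] {v w : ι → ℤ}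
    (hv : ∀ i, |v i| ≤ 1) (hw : ∀ i, |w i| ≤ 1)
    (hsum : ∑ i, v i = ∑ i, w i) (hsq : ∑ i, v i ^ 2 = ∑ i, w i ^ 2) :
    ∃ σ : Equiv.Perm ι, v ∘ σ = w := by
  refine Equiv.Perm.exists_comp_eq_of_card_fiber_eq fun z => ?_
  by_cases hz : |z| ≤ 1
  · have := Int.two_mul_card_fiber_eq hv hz
    rw [hsum, hsq, ← Int.two_mul_card_fiber_eq hw hz] at this
    omega
  · have empty : ∀ u : ι → ℤ, (∀ i, |u i| ≤ 1) → #{i | u i = z} = 0 := fun u hu => by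
      simp only [card_eq_zero, filter_eq_empty_iff]
      exact fun i _ hi => hz (hi ▸ hu i)
    rw [empty v hv, empty w hw]

lemma Fintype.sum_sub_const_sq {ι : Type*} [Fintype ι] (b : ι → ℤ) (c : ℤ) :
    ∑ i, (b i - c) ^ 2 = ∑ i, b i ^ 2 - 2 * c * ∑ i, b i + Fintype.card ι * c ^ 2 := by
  simp only [sub_sq, sum_add_distrib, sum_sub_distrib, ← sum_mul, ← mul_sum, sum_const,
    card_univ, nsmul_eq_mul]
  ring

section NineSquares

variable {a : ℤ} {b : Fin 9 → ℤ} (hsum : ∑ i, b i = 3 * a) (hsq : ∑ i, b i ^ 2 = a ^ 2 + 2)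
include hsum hsq

lemma exists_perm_comp_eq_const_add {c : ℤ} (hc : |a - 3 * c| ≤ 1) {w : Fin 9 → ℤ}
    (hw : ∀ i, |w i| ≤ 1) (hw_sum : ∑ i, w i = 3 * (a - 3 * c))
    (hw_sq : ∑ i, w i ^ 2 = (a - 3 * c) ^ 2 + 2) :
    ∃ σ : Equiv.Perm (Fin 9), b ∘ σ = fun i => c + w i := by
  have hd_sum : ∑ i, (b i - c) = 3 * (a - 3 * c) := by
    simp only [sum_sub_distrib, hsum, sum_const, card_univ, Fintype.card_fin, nsmul_eq_mul]
    ring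
  have hd_sq : ∑ i, (b i - c) ^ 2 = (a - 3 * c) ^ 2 + 2 := by
    rw [Fintype.sum_sub_const_sq, hsum, hsq, Fintype.card_fin]
    ring
  have hd : ∀ i, |b i - c| ≤ 1 := fun i => Int.abs_le_one_of_sq_le_three <|
    (single_le_sum (fun j _ => sq_nonneg (b j - c)) (mem_univ i)).trans <| by
      rw [hd_sq]; nlinarith [abs_le.mp hc]
  obtain ⟨σ, hσ⟩ := Int.exists_perm_comp_eq_of_sum_eq_of_sum_sq_eq hd hw
    (hd_sum.trans hw_sum.symm) (hd_sq.trans hw_sq.symm)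
  exact ⟨σ, funext fun i => by simp [← congrFun hσ i]⟩

end NineSquares

/-- Diophantine classification from the proof of Proposition `a>0`:
if `Σ bᵢ = 3a` and `Σ bᵢ² = a² + 2` for nine integers `b₁, …, b₉`, then up to a
permutation `(a; b)` is `(3t; t+1, t−1, t, …, t)` or
`(3t±2; t, t, t, t±1, …, t±1)` for some integer `t`. -/
theorem nine_squares_classification (a : ℤ) (b : Fin 9 → ℤ)
    (hsum : ∑ i, b i = 3 * a)
    (hsq : ∑ i, (b i) ^ 2 = a ^ 2 + 2) :
    ∃ (σ : Equiv.Perm (Fin 9)) (t : ℤ),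
      (a = 3 * t ∧ b ∘ σ = ![t + 1, t - 1, t, t, t, t, t, t, t]) ∨
      (a = 3 * t + 2 ∧ b ∘ σ = ![t, t, t, t + 1, t + 1, t + 1, t + 1, t + 1, t + 1]) ∨
      (a = 3 * t - 2 ∧ b ∘ σ = ![t, t, t, t - 1, t - 1, t - 1, t - 1, t - 1, t - 1]) := by
  obtain ⟨c, rfl | rfl | rfl⟩ : ∃ c, a = 3 * c ∨ a = 3 * c + 1 ∨ a = 3 * c - 1 :=
    ⟨(a + 1) / 3, by omega⟩
  · obtain ⟨σ, hσ⟩ := exists_perm_comp_eq_const_add hsum hsq (c := c)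
      (w := ![1, -1, 0, 0, 0, 0, 0, 0, 0]) (by norm_num) (by decide)
      (by simp [Fin.sum_univ_succ]) (by simp [Fin.sum_univ_succ])
    refine ⟨σ, c, Or.inl ⟨rfl, hσ.trans ?_⟩⟩
    ext i; fin_cases i <;> simp [sub_eq_add_neg]
  · obtain ⟨σ, hσ⟩ := exists_perm_comp_eq_const_add hsum hsq (c := c)
      (w := ![1, 1, 1, 0, 0, 0, 0, 0, 0]) (by norm_num) (by decide)
      (by simp [Fin.sum_univ_succ]) (by simp [Fin.sum_univ_succ])
    refine ⟨σ, c + 1, Or.inr (Or.inr ⟨by ring, hσ.trans ?_⟩)⟩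
    ext i; fin_cases i <;> simp [sub_eq_add_neg]
  · obtain ⟨σ, hσ⟩ := exists_perm_comp_eq_const_add hsum hsq (c := c)
      (w := ![-1, -1, -1, 0, 0, 0, 0, 0, 0]) (by norm_num) (by decide)
      (by simp [Fin.sum_univ_succ]) (by simp [Fin.sum_univ_succ])
    refine ⟨σ, c - 1, Or.inr (Or.inl ⟨by ring, hσ.trans ?_⟩)⟩
    ext i; fin_cases i <;> simp [sub_eq_add_neg]
end

section
/- Let k be an integer with 1 ≤ k ≤ 8, let a ≥ 1 and b₁, …, b_k be integers, and set c = a² − (b₁² + ⋯ + b_k²). Suppose b₁ + ⋯ + b_k = 3a − c. Then c ≥ 9 − k, and c = 9 − k holds if and only if a = 3 and bᵢ = 1 for every i. -/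
open Finset

/-!
Put `D = C + K = (a - 3) H - Σ (bᵢ - 1) Eᵢ`. The adjunction equality gives `D² = K² - C²`, so the
claim is `D² ≤ 0`, with equality only for `D = 0`. In coordinates `u = a - 3`, `xᵢ = bᵢ - 1` the
adjunction equality reads `Σ xᵢ + Σ xᵢ² = u² + 3u`. Since `x + x² ≥ 0` on the integers this forces
`u ≥ 0`, and if `Σ xᵢ² < u²` then `Σ xᵢ > 3u ≥ 0`, so Cauchy–Schwarz gives
`9u² < (Σ xᵢ)² ≤ k Σ xᵢ² ≤ 8u²`, which is absurd. At equality the same chain gives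
`9u² ≤ 8u²`, so `u = 0` and then every `xᵢ = 0`.
-/

lemma Int.sum_add_sum_sq_nonneg {ι : Type*} (s : Finset ι) (x : ι → ℤ) :
    0 ≤ ∑ i ∈ s, x i + ∑ i ∈ s, x i ^ 2 := by
  rw [← sum_add_distrib]
  exact sum_nonneg fun i _ => by linarith [Int.le_self_sq (-x i), neg_sq (x i)]

variable {ι : Type*} {s : Finset ι} {x : ι → ℤ} {u : ℤ}

lemma sq_le_sum_sq_of_sum_add_sum_sq_eq (hs : #s ≤ 8) (hu : 0 ≤ u)
    (h : ∑ i ∈ s, x i + ∑ i ∈ s, x i ^ 2 = u ^ 2 + 3 * u) :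
    u ^ 2 ≤ ∑ i ∈ s, x i ^ 2 := by
  have hs' : (#s : ℤ) ≤ 8 := by exact_mod_cast hs
  have hcs := sq_sum_le_card_mul_sum_sq (s := s) (f := x)
  have hy : 0 ≤ ∑ i ∈ s, x i ^ 2 := sum_nonneg fun i _ => sq_nonneg (x i)
  by_contra! hlt
  have hx : 3 * u < ∑ i ∈ s, x i := by linarith
  nlinarith [mul_le_mul_of_nonneg_right hs' hy]

lemma eq_zero_of_sq_eq_sum_sq_of_sum_add_sum_sq_eq (hs : #s ≤ 8)
    (h : ∑ i ∈ s, x i + ∑ i ∈ s, x i ^ 2 = u ^ 2 + 3 * u) (heq : u ^ 2 = ∑ i ∈ s, x i ^ 2) :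
    u = 0 ∧ ∀ i ∈ s, x i = 0 := by
  have hs' : (#s : ℤ) ≤ 8 := by exact_mod_cast hs
  have hcs := sq_sum_le_card_mul_sum_sq (s := s) (f := x)
  have hx : ∑ i ∈ s, x i = 3 * u := by linarith
  rw [hx, ← heq] at hcs
  have hu : u = 0 := by nlinarith [mul_le_mul_of_nonneg_right hs' (sq_nonneg u)]
  subst hu
  have hzero := (sum_eq_zero_iff_of_nonneg fun i _ => sq_nonneg (x i)).mp (by simpa using heq.symm)
  exact ⟨rfl, fun i hi => pow_eq_zero_iff two_ne_zero |>.mp (hzero i hi)⟩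

theorem genus_one_square_bound_general (k : ℕ) (hk8 : k ≤ 8)
    (a : ℤ) (ha : 1 ≤ a) (b : Fin k → ℤ)
    (hadj : ∑ i, b i = 3 * a - (a ^ 2 - ∑ i, (b i) ^ 2)) :
    (9 : ℤ) - k ≤ a ^ 2 - ∑ i, (b i) ^ 2 ∧
    (a ^ 2 - ∑ i, (b i) ^ 2 = (9 : ℤ) - k ↔ a = 3 ∧ ∀ i, b i = 1) := by
  have hcard : #(univ : Finset (Fin k)) ≤ 8 := by simpa using hk8
  have hsum : ∑ i, (b i - 1) = ∑ i, b i - k := by simp [sum_sub_distrib]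
  have hD : ∑ i, (b i - 1) + ∑ i, (b i - 1) ^ 2 = (a - 3) ^ 2 + 3 * (a - 3) := by
    rw [← sum_add_distrib]
    calc ∑ i, (b i - 1 + (b i - 1) ^ 2) = ∑ i, (b i ^ 2 - b i) :=
          sum_congr rfl fun i _ => by ring
      _ = _ := by rw [sum_sub_distrib]; linarith
  have hu : 0 ≤ a - 3 := by nlinarith [Int.sum_add_sum_sq_nonneg univ (fun i => b i - 1)]
  have hc : a ^ 2 - ∑ i, b i ^ 2 - (9 - k) = ∑ i, (b i - 1) ^ 2 - (a - 3) ^ 2 := by linarith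
  refine ⟨by linarith [sq_le_sum_sq_of_sum_add_sum_sq_eq hcard hu hD], fun h => ?_, ?_⟩
  · obtain ⟨ha3, hb⟩ := eq_zero_of_sq_eq_sum_sq_of_sum_add_sum_sq_eq hcard hD (by linarith)
    exact ⟨by linarith, fun i => by linarith [hb i (mem_univ i)]⟩
  · rintro ⟨rfl, hb⟩
    simp [hb]

/-- Lemma `small+` (2) in arithmetic form: if `1 ≤ k ≤ 8`, `a ≥ 1`,
`c = a² − Σ bᵢ²` and `Σ bᵢ = 3a − c`, then `c ≥ 9 − k`, with equality iff
`a = 3` and every `bᵢ = 1`. -/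
theorem genus_one_square_bound (k : ℕ) (hk1 : 1 ≤ k) (hk8 : k ≤ 8)
    (a : ℤ) (ha : 1 ≤ a) (b : Fin k → ℤ)
    (hadj : ∑ i, b i = 3 * a - (a ^ 2 - ∑ i, (b i) ^ 2)) :
    (9 : ℤ) - k ≤ a ^ 2 - ∑ i, (b i) ^ 2 ∧
    (a ^ 2 - ∑ i, (b i) ^ 2 = (9 : ℤ) - k ↔ a = 3 ∧ ∀ i, b i = 1) :=
  genus_one_square_bound_general k hk8 a ha b hadj
end

section
/- Let a < 0 be an integer and b₁, …, b_k integers such that a + b₁ > 0 and (a−1)(a−2) ≥ Σᵢ bᵢ(bᵢ+1). Then b₁ = 1 − a and bᵢ(bᵢ+1) = 0 (i.e. bᵢ ∈ {−1, 0}) for every i ≥ 2; in particular the adjunction inequality is an equality. -/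
/-!
Since `a + b₁ > 0` we have `b₁ ≥ 1 − a ≥ 0`, and `x ↦ x(x+1)` is strictly increasing on `x ≥ 0`,
so the single term `b₁(b₁+1)` already reaches `(1−a)(2−a) = (a−1)(a−2)`. Every `bᵢ(bᵢ+1)` is
nonnegative on integers, so the adjunction inequality leaves no room: the first term equals the
bound, forcing `b₁ = 1 − a`, and all other terms vanish.
-/

theorem strictMonoOn_mul_add_one {R : Type*} [Semiring R] [PartialOrder R]
    [IsStrictOrderedRing R] : StrictMonoOn (fun x : R => x * (x + 1)) (Set.Ici 0) := by
  intro x (hx : 0 ≤ x) y _ hxy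
  exact mul_lt_mul'' hxy (by gcongr) hx (by positivity)

theorem Int.mul_add_one_nonneg (n : ℤ) : 0 ≤ n * (n + 1) := by
  rcases le_or_gt n (-1) with h | h <;> nlinarith

theorem Int.mul_add_one_eq_zero_iff {n : ℤ} : n * (n + 1) = 0 ↔ n = -1 ∨ n = 0 := by
  rw [mul_eq_zero, add_eq_zero_iff_eq_neg, or_comm]

theorem Finset.sum_eq_and_apply_eq_of_sum_le_of_le_apply {ι M : Type*} [Fintype ι]
    [AddCommMonoid M] [PartialOrder M] [IsOrderedCancelAddMonoid M] {f : ι → M} {c : M}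
    (hf : ∀ i, 0 ≤ f i) (i₀ : ι) (hsum : ∑ i, f i ≤ c) (hi₀ : c ≤ f i₀) :
    ∑ i, f i = c ∧ f i₀ = c ∧ ∀ i ≠ i₀, f i = 0 := by
  have hsingle : f i₀ ≤ ∑ i, f i := single_le_sum (fun i _ => hf i) (mem_univ i₀)
  have hsum_eq : ∑ i, f i = f i₀ := le_antisymm (hsum.trans hi₀) hsingle
  refine ⟨le_antisymm hsum (hi₀.trans hsingle), le_antisymm (hsingle.trans hsum) hi₀, ?_⟩
  classical
  rw [← add_sum_erase _ _ (mem_univ i₀), add_eq_left,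
    sum_eq_zero_iff_of_nonneg fun i _ => hf i] at hsum_eq
  exact fun i hi => hsum_eq i (mem_erase.mpr ⟨hi, mem_univ i⟩)

/-- Arithmetic core of Lemma `a<0`: if `a < 0`, `a + b₁ > 0` and
`(a−1)(a−2) ≥ Σ bᵢ(bᵢ+1)`, then `b₁ = 1 − a`, every other `bᵢ ∈ {−1, 0}`, and
the adjunction inequality is an equality. -/
theorem negative_H_coefficient (k : ℕ) (hk : 1 ≤ k) (a : ℤ) (ha : a < 0)
    (b : Fin k → ℤ)
    (hpos : 0 < a + b ⟨0, hk⟩)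
    (hadj : ∑ i, b i * (b i + 1) ≤ (a - 1) * (a - 2)) :
    b ⟨0, hk⟩ = 1 - a ∧
    (∀ i : Fin k, i ≠ ⟨0, hk⟩ → b i = -1 ∨ b i = 0) ∧
    ∑ i, b i * (b i + 1) = (a - 1) * (a - 2) := by
  have hmono := strictMonoOn_mul_add_one (R := ℤ)
  have hbound : (1 - a) * (1 - a + 1) = (a - 1) * (a - 2) := by ring
  have hstart : (1 - a) ∈ Set.Ici (0 : ℤ) := by simp only [Set.mem_Ici]; omega
  have hb₀ : b ⟨0, hk⟩ ∈ Set.Ici (0 : ℤ) := by simp only [Set.mem_Ici]; omega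
  have hfirst : (a - 1) * (a - 2) ≤ b ⟨0, hk⟩ * (b ⟨0, hk⟩ + 1) :=
    hbound ▸ (hmono.le_iff_le hstart hb₀).mpr (by omega)
  obtain ⟨hsum, hterm, hrest⟩ := Finset.sum_eq_and_apply_eq_of_sum_le_of_le_apply
    (fun i => Int.mul_add_one_nonneg (b i)) _ hadj hfirst
  refine ⟨hmono.injOn hb₀ hstart (hterm.trans hbound.symm), ?_, hsum⟩
  exact fun i hi => Int.mul_add_one_eq_zero_iff.mp (hrest i hi)
end

section
/- Let a, b, c be integers with a ≤ 0, c ≤ 0, a + b > 0 and (a−1)(a−2) ≥ b(b+1) + c(c+1). Then b = 1 − a ≥ 1, c ∈ {−1, 0}, and a² − b² − c² < 0. Moreover, if (a', b', c') is another triple of integers satisfying the same hypotheses, then a·a' − b·b' − c·c' < 0. -/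
/-! Write `A = aH + bE₁ + cE₂`. Since `a + b ≥ 1` and `a ≤ 0`, we get `b ≥ 1 - a ≥ 1`, so
`b(b+1) ≥ (1-a)(2-a) = (a-1)(a-2)`; as `c(c+1) ≥ 0` for every integer `c`, the adjunction
inequality forces equality in both places, i.e. `b = 1 - a` and `c ∈ {-1, 0}`. For two such
classes the pairing is `a + a' - 1 - cc'`, negative because `a, a' ≤ 0` and `cc' ≥ 0`. -/

namespace Int

theorem mul_add_one_nonneg_s13 (c : ℤ) : 0 ≤ c * (c + 1) := by
  rcases le_or_gt 0 c with hc | hc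
  · positivity
  · exact mul_nonneg_of_nonpos_of_nonpos hc.le (by omega)

theorem mul_add_one_eq_zero_iff_s13 {c : ℤ} : c * (c + 1) = 0 ↔ c = -1 ∨ c = 0 := by
  rw [mul_eq_zero, add_eq_zero_iff_eq_neg, or_comm]

end Int

theorem eq_one_sub_and_mul_add_one_eq_zero_of_adjunction {a b c : ℤ} (ha : a ≤ 0)
    (hab : 0 < a + b) (hadj : b * (b + 1) + c * (c + 1) ≤ (a - 1) * (a - 2)) :
    b = 1 - a ∧ c * (c + 1) = 0 := by
  have hb : 1 - a ≤ b := by omega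
  have hmono : (a - 1) * (a - 2) ≤ b * (b + 1) :=
    calc (a - 1) * (a - 2) = (1 - a) * (1 - a + 1) := by ring
      _ ≤ b * (b + 1) := mul_le_mul hb (by omega) (by omega) (by omega)
  have hc : c * (c + 1) = 0 := le_antisymm (by linarith) c.mul_add_one_nonneg_s13
  refine ⟨?_, hc⟩
  have hfactor : (b - (1 - a)) * (b + (1 - a) + 1) = 0 := by
    linear_combination le_antisymm (by linarith) hmono
  rcases mul_eq_zero.mp hfactor with h | h <;> omega

theorem eq_one_sub_and_eq_neg_one_or_eq_zero_of_adjunction {a b c : ℤ} (ha : a ≤ 0)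
    (hab : 0 < a + b)
    (hadj : b * (b + 1) + c * (c + 1) ≤ (a - 1) * (a - 2)) :
    b = 1 - a ∧ (c = -1 ∨ c = 0) := by
  obtain ⟨hb, hc⟩ := eq_one_sub_and_mul_add_one_eq_zero_of_adjunction ha hab hadj
  exact ⟨hb, Int.mul_add_one_eq_zero_iff_s13.mp hc⟩

theorem mul_sub_one_sub_mul_one_sub_sub_mul_neg {a a' c c' : ℤ} (ha : a ≤ 0) (ha' : a' ≤ 0)
    (hcc' : 0 ≤ c * c') : a * a' - (1 - a) * (1 - a') - c * c' < 0 := by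
  linarith

theorem mul_nonneg_of_eq_neg_one_or_eq_zero {c c' : ℤ} (hc : c = -1 ∨ c = 0)
    (hc' : c' = -1 ∨ c' = 0) : 0 ≤ c * c' :=
  mul_nonneg_of_nonpos_of_nonpos (by omega) (by omega)

theorem cp2_two_blowup_A_general (a b c : ℤ) (ha : a ≤ 0)
    (hab : 0 < a + b)
    (hadj : b * (b + 1) + c * (c + 1) ≤ (a - 1) * (a - 2)) :
    b = 1 - a ∧ 1 ≤ b ∧ (c = -1 ∨ c = 0) ∧
    a ^ 2 - b ^ 2 - c ^ 2 < 0 ∧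
    ∀ a' b' c' : ℤ, a' ≤ 0 → c' ≤ 0 → 0 < a' + b' →
      b' * (b' + 1) + c' * (c' + 1) ≤ (a' - 1) * (a' - 2) →
      a * a' - b * b' - c * c' < 0 := by
  obtain ⟨rfl, hc⟩ := eq_one_sub_and_eq_neg_one_or_eq_zero_of_adjunction ha hab hadj
  refine ⟨rfl, by omega, hc, ?_, ?_⟩
  · simpa only [sq] using
      mul_sub_one_sub_mul_one_sub_sub_mul_neg ha ha (mul_nonneg_of_eq_neg_one_or_eq_zero hc hc)
  · intro a' b' c' ha' _ hab' hadj'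
    obtain ⟨rfl, hc'⟩ := eq_one_sub_and_eq_neg_one_or_eq_zero_of_adjunction ha' hab' hadj'
    exact mul_sub_one_sub_mul_one_sub_sub_mul_neg ha ha'
      (mul_nonneg_of_eq_neg_one_or_eq_zero hc hc')

/-- Arithmetic content of Lemma `A` for `ℂP²#2ℂ̄P²`: for integers `a ≤ 0`,
`c ≤ 0` with `a + b > 0` and `(a−1)(a−2) ≥ b(b+1) + c(c+1)`, one has
`b = 1 − a ≥ 1`, `c ∈ {−1, 0}`, `a² − b² − c² < 0`, and any two such triples
pair negatively. -/
theorem cp2_two_blowup_A (a b c : ℤ) (ha : a ≤ 0) (hc : c ≤ 0)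
    (hab : 0 < a + b)
    (hadj : b * (b + 1) + c * (c + 1) ≤ (a - 1) * (a - 2)) :
    b = 1 - a ∧ 1 ≤ b ∧ (c = -1 ∨ c = 0) ∧
    a ^ 2 - b ^ 2 - c ^ 2 < 0 ∧
    ∀ a' b' c' : ℤ, a' ≤ 0 → c' ≤ 0 → 0 < a' + b' →
      b' * (b' + 1) + c' * (c' + 1) ≤ (a' - 1) * (a' - 2) →
      a * a' - b * b' - c * c' < 0 :=
  cp2_two_blowup_A_general a b c ha hab hadj
end

section
/- Let s ≥ 1 be an integer, c₀ ∈ {0, −1}, and set A = (1−s, s, c₀) ∈ ℝ³. Suppose real numbers v, w satisfy (1, v, w) = p·A + Σᵢ₌₁ⁿ qᵢ·Bᵢ in ℝ³, where p ≥ 0, each qᵢ > 0, and each Bᵢ = (αᵢ, βᵢ, γᵢ) ∈ ℤ³ either equals (0, 0, 1) or satisfies αᵢ ≥ 1, αᵢ + βᵢ ≥ 0 and αᵢ + γᵢ ≥ 0. Then v ≥ −1, and if v = −1 then w ≥ −1. -/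
/-!
Evaluate the decomposition of `(1, v, w)` on the linear forms `x + y` and `x + z`. Both are
nonnegative on every admissible `Bᵢ`, and `x + y` takes the value `1` on `A`, so `p ≤ 1 + v`;
with `p ≥ 0` this gives `v ≥ −1`. If `v = −1`, this forces `p = 0`, and then `x + z` gives
`0 ≤ 1 + w`.
-/

theorem mul_le_apply_of_eq_smul_add_sum {ι M : Type*} [Fintype ι] [AddCommGroup M]
    [Module ℝ M] (f : M →ₗ[ℝ] ℝ) {x a : M} {p : ℝ} {q : ι → ℝ} {B : ι → M}
    (hq : ∀ i, 0 ≤ q i) (hB : ∀ i, 0 ≤ f (B i)) (hx : x = p • a + ∑ i, q i • B i) :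
    p * f a ≤ f x := by
  have hsum : 0 ≤ ∑ i, q i * f (B i) := Finset.sum_nonneg fun i _ => mul_nonneg (hq i) (hB i)
  simp only [hx, map_add, map_sum, map_smul, smul_eq_mul]
  linarith

theorem add_nonneg_of_admissible {a b c : ℤ}
    (h : (a = 0 ∧ b = 0 ∧ c = 1) ∨ (1 ≤ a ∧ 0 ≤ a + b ∧ 0 ≤ a + c)) :
    (0 : ℝ) ≤ a + b ∧ (0 : ℝ) ≤ a + c := by
  constructor <;> exact_mod_cast (by omega)

theorem cca_neg_general (s : ℤ) (c₀ : ℤ)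
    (v w : ℝ) (m : ℕ) (p : ℝ) (hp : 0 ≤ p)
    (q : Fin m → ℝ) (hq : ∀ i, 0 < q i)
    (α β γ : Fin m → ℤ)
    (hB : ∀ i, (α i = 0 ∧ β i = 0 ∧ γ i = 1) ∨
      (1 ≤ α i ∧ 0 ≤ α i + β i ∧ 0 ≤ α i + γ i))
    (heq : ![(1 : ℝ), v, w] =
      p • ![1 - (s : ℝ), (s : ℝ), (c₀ : ℝ)] +
        ∑ i, q i • ![(α i : ℝ), (β i : ℝ), (γ i : ℝ)]) :
    -1 ≤ v ∧ (v = -1 → -1 ≤ w) := by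
  have hq' i := (hq i).le
  have hB' i := add_nonneg_of_admissible (hB i)
  have hv : p ≤ 1 + v := by
    simpa using mul_le_apply_of_eq_smul_add_sum (dotProductEquiv ℝ (Fin 3) ![1, 1, 0])
      hq' (fun i => by simpa using (hB' i).1) heq
  refine ⟨by linarith, fun hv₁ => ?_⟩
  obtain rfl : p = 0 := by linarith
  have hw : 0 ≤ 1 + w := by
    simpa using mul_le_apply_of_eq_smul_add_sum (dotProductEquiv ℝ (Fin 3) ![1, 0, 1])
      hq' (fun i => by simpa using (hB' i).2) heq
  linarith

/-- Arithmetic content of Lemma `cca<0` for `ℂP²#2ℂ̄P²` (classes written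
`(a, b, c)` for `aH + bE₁ + cE₂`): if `(1, v, w) = p·A + Σ qᵢ·Bᵢ` with
`A = (1−s, s, c₀)`, `s ≥ 1`, `c₀ ∈ {0, −1}`, `p ≥ 0`, `qᵢ > 0`, and each
integral triple `Bᵢ = (αᵢ, βᵢ, γᵢ)` equal to `(0,0,1)` or with `αᵢ ≥ 1`,
`αᵢ + βᵢ ≥ 0`, `αᵢ + γᵢ ≥ 0`, then `v ≥ −1`, and `v = −1` forces `w ≥ −1`. -/
theorem cca_neg (s : ℤ) (hs : 1 ≤ s) (c₀ : ℤ) (hc₀ : c₀ = 0 ∨ c₀ = -1)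
    (v w : ℝ) (m : ℕ) (p : ℝ) (hp : 0 ≤ p)
    (q : Fin m → ℝ) (hq : ∀ i, 0 < q i)
    (α β γ : Fin m → ℤ)
    (hB : ∀ i, (α i = 0 ∧ β i = 0 ∧ γ i = 1) ∨
      (1 ≤ α i ∧ 0 ≤ α i + β i ∧ 0 ≤ α i + γ i))
    (heq : ![(1 : ℝ), v, w] =
      p • ![1 - (s : ℝ), (s : ℝ), (c₀ : ℝ)] +
        ∑ i, q i • ![(α i : ℝ), (β i : ℝ), (γ i : ℝ)]) :
    -1 ≤ v ∧ (v = -1 → -1 ≤ w) :=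
  cca_neg_general s c₀ v w m p hp q hq α β γ hB heq
end
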